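/- Let k be a commutative ring of characteristic zero. Fix positive integers a_0 < a_1 < ⋯ < a_n, block sizes c_0, …, c_n ≥ 1, and let R := k[x_{ij} : 0 ≤ i ≤ n, 1 ≤ j ≤ c_i] be the polynomial ring graded by wt(x_{ij}) = a_i. Let d ≥ 0 and let V_d be a k-submodule of the weighted-homogeneous degree-d part of R satisfying the nondegeneracy hypothesis: for every quotient ring k' of k, every b > 0, and every k'-derivation ∂' of weight −b of the subring k'[x_{ij} : i ≥ 1] in the variables of weight > a_0, if ∂' vanishes on the image V'_d of V_d (reduce coefficients along k → k' and set all weight-a_0 variables x_{0j} to 0), then ∂' = 0. Then for every b > 0 with b ≠ a_0, every k-derivation of R of weight −b vanishing on V_d is zero. (Paper's Lemma II.d, first part: L_{−b}(V_d) = 0 for b ≠ a_0.) -/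

import Mathlib

/-- The index set of the variables `x_{ij}`, `0 ≤ i ≤ n`, `1 ≤ j ≤ c i`:
blocks `i = 0,…,n` of sizes `c i`. -/
abbrev BlockIdx (n : ℕ) (c : Fin (n + 1) → ℕ) : Type := (i : Fin (n + 1)) × Fin (c i)

/-- The weight of the variable `x_{ij}` is `a i`. -/
def blockWt {n : ℕ} {c : Fin (n + 1) → ℕ} (a : Fin (n + 1) → ℕ) (s : BlockIdx n c) : ℤ :=
  a s.1

/-- A derivation of a graded polynomial ring (weights `w`) has weight `-b` if each `∂ x_s` is
weighted homogeneous of degree `w s - b` (hence zero when `w s - b < 0`, since all weights are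
nonnegative). -/
def DerivationHasWt {k : Type*} [CommRing k] {τ : Type*} (w : τ → ℤ) (b : ℤ)
    (der : Derivation k (MvPolynomial τ k) (MvPolynomial τ k)) : Prop :=
  ∀ s : τ, MvPolynomial.IsWeightedHomogeneous w (der (MvPolynomial.X s)) (w s - b)

/-- The ring map `k[x_{ij}] → k'[x_{ij} : i ≥ 1]`, reducing coefficients along the quotient
`k → k' = k ⧸ J` and setting the weight-`a 0` variables `x_{0j}` to `0`. -/
noncomputable def restrictBlocks {k : Type*} [CommRing k] (n : ℕ) (c : Fin (n + 1) → ℕ)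
    (J : Ideal k) :
    MvPolynomial (BlockIdx n c) k →+*
      MvPolynomial {s : BlockIdx n c // s.1 ≠ 0} (k ⧸ J) :=
  (MvPolynomial.aeval fun s : BlockIdx n c =>
      if h : s.1 = 0 then 0 else MvPolynomial.X (⟨s, h⟩ : {s : BlockIdx n c // s.1 ≠ 0})
    ).toRingHom.comp (MvPolynomial.map (Ideal.Quotient.mk J))

/-!
A derivation `∂` of weight `-b`, `b ≠ a₀`, kills every `x₀ⱼ`: `∂ x₀ⱼ` would have weight
`a₀ - b`, which is nonzero and below the smallest weight `a₀` of a variable. Write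
`R = A[x₀ⱼ]` with `A = k[xᵢⱼ : i ≥ 1]`; the `x^m`-coefficient of `∂` restricted to `A` is a
derivation `∂ₘ` of `A` of weight `-(b + |m| a₀)`. If `f = ∑ᵣ xʳ fᵣ ∈ V_d`, the `x^m`-coefficient
of `∂ f = 0` is `∑_{r ≤ m} ∂_{m-r} fᵣ`, so once `∂ₘ' = 0` for all `m' < m` we get `∂ₘ f₀ = 0`,
and `f₀` is the image of `f` in `A`. The nondegeneracy hypothesis for `k' = k` then forces
`∂ₘ = 0`; by induction on `m` all `∂ₘ` vanish, so `∂` kills `A` as well as the `x₀ⱼ`.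
-/

open MvPolynomial

theorem Finsupp.weight_mapDomain {α β M : Type*} [AddCommMonoid M] (w : β → M) (g : α → β)
    (u : α →₀ ℕ) : weight w (mapDomain g u) = weight (w ∘ g) u := by
  simp [weight_apply, sum_mapDomain_index, add_smul]

theorem Finsupp.natCast_weight {α : Type*} (w : α → ℕ) (u : α →₀ ℕ) :
    ((weight w u : ℕ) : ℤ) = weight (fun i => (w i : ℤ)) u := by
  simp [weight_apply, Finsupp.sum]

namespace Derivation

variable {R A B : Type*} [CommRing R] [CommRing A] [CommRing B] [Algebra R A] [Algebra R B]

def mapAlgEquiv (e : A ≃ₐ[R] B) (D : Derivation R A A) : Derivation R B B :=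
  Derivation.mk' (e.toLinearMap ∘ₗ D.toLinearMap ∘ₗ e.symm.toLinearMap) fun b₁ b₂ => by
    simp [leibniz, smul_eq_mul]

@[simp]
theorem mapAlgEquiv_apply (e : A ≃ₐ[R] B) (D : Derivation R A A) (b : B) :
    D.mapAlgEquiv e b = e (D (e.symm b)) := rfl

theorem eq_zero_of_mapAlgEquiv_eq_zero {e : A ≃ₐ[R] B} {D : Derivation R A A}
    (h : D.mapAlgEquiv e = 0) : D = 0 := by
  ext a
  simpa using congr($h (e a))

end Derivation

namespace MvPolynomial

theorem IsWeightedHomogeneous.eq_zero_of_lt {R σ M : Type*} [CommSemiring R] [AddCommMonoid M]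
    [LinearOrder M] [IsOrderedAddMonoid M] {w : σ → M} {w₀ e : M} (hw₀ : 0 ≤ w₀)
    (hw : ∀ s, w₀ ≤ w s) {f : MvPolynomial σ R} (hf : IsWeightedHomogeneous w f e)
    (he₀ : e ≠ 0) (he : e < w₀) : f = 0 := by
  ext d
  by_contra hd
  have hwd : Finsupp.weight w d = e := hf hd
  obtain rfl | ⟨s, hs⟩ := (eq_or_ne d 0).imp_right Finsupp.support_nonempty_iff.mpr
  · exact he₀ (by simpa using hwd.symm)
  · have hws := Finsupp.le_weight_of_ne_zero (fun s => hw₀.trans (hw s))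
      (Finsupp.mem_support_iff.mp hs)
    exact (he.trans_le ((hw s).trans (hws.trans hwd.le))).false

theorem IsWeightedHomogeneous.map {R R' σ M : Type*} [CommSemiring R] [CommSemiring R']
    [AddCommMonoid M] (φ : R →+* R') {w : σ → M} {f : MvPolynomial σ R} {e : M}
    (hf : IsWeightedHomogeneous w f e) : IsWeightedHomogeneous w (map φ f) e :=
  fun d hd => hf fun h => hd (by rw [coeff_map, h, map_zero])

section MapDerivation

variable {k k' σ : Type*} [CommRing k] [CommRing k'] (φ : k →+* k')
  (E : Derivation k (MvPolynomial σ k) (MvPolynomial σ k))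

noncomputable def mapDerivation : Derivation k' (MvPolynomial σ k') (MvPolynomial σ k') :=
  mkDerivation k' fun i => map φ (E (X i))

theorem mapDerivation_X (i : σ) : mapDerivation φ E (X i) = map φ (E (X i)) :=
  mkDerivation_X _ _ _

theorem mapDerivation_map (q : MvPolynomial σ k) :
    mapDerivation φ E (map φ q) = map φ (E q) := by
  induction q using MvPolynomial.induction_on with
  | C r => simp
  | add p q hp hq => simp [hp, hq]
  | mul_X p i hp => simp [Derivation.leibniz, hp, mapDerivation_X]

variable {φ E}

theorem eq_zero_of_mapDerivation_eq_zero (hφ : Function.Injective φ)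
    (h : mapDerivation φ E = 0) : E = 0 :=
  derivation_ext fun i => map_injective φ hφ <| by simpa [mapDerivation_X] using congr($h (X i))

end MapDerivation

section CoeffDerivation

variable {k S τ : Type*} [CommRing k] [CommRing S] [Algebra k S]
  (D : Derivation k (MvPolynomial τ S) (MvPolynomial τ S))

noncomputable def coeffDerivation (m : τ →₀ ℕ) : Derivation k S S :=
  Derivation.mk'
    { toFun q := coeff m (D (C q))
      map_add' q₁ q₂ := by simp
      map_smul' r q := by
        rw [← algebraMap_smul S r q, smul_eq_mul, C_mul, ← smul_eq_C_mul]
        simp }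
    fun q₁ q₂ => by simp [Derivation.leibniz, coeff_C_mul]

@[simp]
theorem coeffDerivation_apply (m : τ →₀ ℕ) (q : S) :
    coeffDerivation D m q = coeff m (D (C q)) := rfl

variable {D}

theorem derivation_monomial_one_eq_zero (hX : ∀ i, D (X i) = 0) (r : τ →₀ ℕ) :
    D (monomial r 1) = 0 := by
  induction r using Finsupp.induction with
  | zero => simp
  | single_add i e r _ _ ih =>
    simp [monomial_single_add, Derivation.leibniz, Derivation.leibniz_pow, hX, ih]

theorem eq_zero_of_forall_coeffDerivation_eq_zero (hX : ∀ i, D (X i) = 0)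
    (hcoeff : ∀ m, coeffDerivation D m = 0) : D = 0 := by
  have hC : ∀ q, D (C q) = 0 := fun q => MvPolynomial.ext _ _ fun m => by
    simpa using congr($(hcoeff m) q)
  refine Derivation.ext fun p => ?_
  induction p using MvPolynomial.induction_on with
  | C q => exact hC q
  | add p q hp hq => simp [hp, hq]
  | mul_X p i hp => simp_all [Derivation.leibniz]

theorem coeff_derivation_eq_sum (hX : ∀ i, D (X i) = 0) (f : MvPolynomial τ S) (m : τ →₀ ℕ) :
    coeff m (D f) =
      ∑ r ∈ f.support, if r ≤ m then coeffDerivation D (m - r) (coeff r f) else 0 := by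
  have hDf : D f = ∑ r ∈ f.support, monomial r 1 * D (C (coeff r f)) := by
    conv_lhs => rw [f.as_sum]
    rw [map_sum]
    refine Finset.sum_congr rfl fun r _ => ?_
    rw [← mul_one (coeff r f), ← C_mul_monomial, Derivation.leibniz,
      derivation_monomial_one_eq_zero hX, smul_zero, zero_add, smul_eq_mul, mul_one]
  simp [hDf, coeff_sum, coeff_monomial_mul']

theorem coeffDerivation_coeff_zero_eq_zero (hX : ∀ i, D (X i) = 0) {f : MvPolynomial τ S}
    (hf : D f = 0) {m : τ →₀ ℕ} (hm : ∀ m' < m, coeffDerivation D m' = 0) :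
    coeffDerivation D m (coeff 0 f) = 0 := by
  have hsum := coeff_derivation_eq_sum hX f m
  rw [hf, coeff_zero, Finset.sum_eq_single 0] at hsum
  · simpa using hsum.symm
  · intro r _ hr
    split_ifs with hrm
    · have hlt : m - r < m := tsub_le_self.lt_of_ne fun h => hr <| by
        simpa [h] using tsub_add_cancel_of_le hrm
      simp [hm (m - r) hlt]
    · rfl
  · intro h
    simp [notMem_support_iff.mp h]

end CoeffDerivation

theorem coeff_coeff_sumAlgEquiv {R S₁ S₂ : Type*} [CommSemiring R]
    (f : MvPolynomial (S₁ ⊕ S₂) R) (m : S₁ →₀ ℕ) (d : S₂ →₀ ℕ) :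
    coeff d (coeff m (sumAlgEquiv R S₁ S₂ f)) = coeff (Finsupp.sumElim m d) f := by
  simp [sumAlgEquiv, AddMonoidAlgebra.curryAlgEquiv, AddMonoidAlgebra.curryRingEquiv,
    AddMonoidAlgebra.curryAddEquiv, coeff]

section SplitAlgEquiv

variable {R σ : Type*} [CommSemiring R] (p : σ → Prop) [DecidablePred p]

noncomputable def splitAlgEquiv :
    MvPolynomial σ R ≃ₐ[R] MvPolynomial {s // p s} (MvPolynomial {s // ¬p s} R) :=
  (renameEquiv R (Equiv.sumCompl p).symm).trans (sumAlgEquiv R _ _)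

variable {p}

@[simp]
theorem splitAlgEquiv_C (r : R) : splitAlgEquiv p (C r) = C (C r) := by
  simp [splitAlgEquiv]

theorem splitAlgEquiv_X_of_pos {s : σ} (hs : p s) :
    splitAlgEquiv (R := R) p (X s) = X ⟨s, hs⟩ := by
  simp [splitAlgEquiv, Equiv.sumCompl_symm_apply_of_pos hs]

theorem splitAlgEquiv_X_of_neg {s : σ} (hs : ¬p s) :
    splitAlgEquiv (R := R) p (X s) = C (X ⟨s, hs⟩) := by
  simp [splitAlgEquiv, Equiv.sumCompl_symm_apply_of_neg hs]

theorem splitAlgEquiv_symm_X (t : {s // p s}) :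
    (splitAlgEquiv (R := R) p).symm (X t) = X t.1 := by
  rw [AlgEquiv.symm_apply_eq, splitAlgEquiv_X_of_pos t.2]

theorem splitAlgEquiv_symm_C_X (t : {s // ¬p s}) :
    (splitAlgEquiv (R := R) p).symm (C (X t)) = X t.1 := by
  rw [AlgEquiv.symm_apply_eq, splitAlgEquiv_X_of_neg t.2]

theorem coeff_coeff_splitAlgEquiv (f : MvPolynomial σ R) (m : {s // p s} →₀ ℕ)
    (d : {s // ¬p s} →₀ ℕ) :
    coeff d (coeff m (splitAlgEquiv p f)) =
      coeff (m.mapDomain Subtype.val + d.mapDomain Subtype.val) f := by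
  let e := Equiv.sumCompl p
  have hsplit : Finsupp.sumElim m d = ((Finsupp.sumElim m d).mapDomain e).mapDomain e.symm := by
    rw [← Finsupp.mapDomain_comp, e.symm_comp_self, Finsupp.mapDomain_id]
  have hval : (Finsupp.sumElim m d).mapDomain e =
      m.mapDomain Subtype.val + d.mapDomain Subtype.val := by
    rw [Finsupp.sumElim_eq_add, Finsupp.mapDomain_add, ← Finsupp.mapDomain_comp,
      ← Finsupp.mapDomain_comp]
    rfl
  calc coeff d (coeff m (splitAlgEquiv p f))
      = coeff (Finsupp.sumElim m d) (rename e.symm f) := coeff_coeff_sumAlgEquiv _ _ _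
    _ = _ := by rw [hsplit, coeff_rename_mapDomain _ e.symm.injective, hval]

theorem IsWeightedHomogeneous.coeff_splitAlgEquiv {M : Type*} [AddCommGroup M] {w : σ → M}
    {f : MvPolynomial σ R} {e : M} (hf : IsWeightedHomogeneous w f e) (m : {s // p s} →₀ ℕ) :
    IsWeightedHomogeneous (fun t : {s // ¬p s} => w t) (coeff m (splitAlgEquiv p f))
      (e - Finsupp.weight (fun t : {s // p s} => w t) m) := by
  intro d hd
  rw [coeff_coeff_splitAlgEquiv] at hd
  rw [eq_sub_iff_add_eq', ← hf hd, map_add, Finsupp.weight_mapDomain, Finsupp.weight_mapDomain]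
  rfl

end SplitAlgEquiv

end MvPolynomial

theorem DerivationHasWt.mapDerivation {k k' σ : Type*} [CommRing k] [CommRing k']
    {φ : k →+* k'} {E : Derivation k (MvPolynomial σ k) (MvPolynomial σ k)} {w : σ → ℤ} {b : ℤ}
    (hE : DerivationHasWt w b E) : DerivationHasWt w b (mapDerivation φ E) := fun s => by
  rw [mapDerivation_X]
  exact (hE s).map φ

theorem DerivationHasWt.coeffDerivation_splitAlgEquiv {k σ : Type*} [CommRing k]
    {p : σ → Prop} [DecidablePred p] {w : σ → ℕ} {b : ℕ}
    {der : Derivation k (MvPolynomial σ k) (MvPolynomial σ k)}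
    (h : DerivationHasWt (fun s => (w s : ℤ)) b der) (m : {s // p s} →₀ ℕ) :
    DerivationHasWt (fun t : {s // ¬p s} => (w t : ℤ))
      ↑(b + Finsupp.weight (fun t : {s // p s} => w t) m)
      (coeffDerivation (der.mapAlgEquiv (splitAlgEquiv p)) m) := fun t => by
  have hdeg : (w t : ℤ) - ↑(b + Finsupp.weight (fun t : {s // p s} => w t) m) =
      (w t - b) - Finsupp.weight (fun t : {s // p s} => (w t : ℤ)) m := by
    push_cast [Finsupp.natCast_weight]
    ring
  rw [coeffDerivation_apply, Derivation.mapAlgEquiv_apply, splitAlgEquiv_symm_C_X, hdeg]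
  exact (h t.1).coeff_splitAlgEquiv m

theorem restrictBlocks_eq_map_coeff_zero {k : Type*} [CommRing k] {n : ℕ}
    {c : Fin (n + 1) → ℕ} (J : Ideal k) (f : MvPolynomial (BlockIdx n c) k) :
    restrictBlocks n c J f =
      map (Ideal.Quotient.mk J) (coeff 0 (splitAlgEquiv (fun s : BlockIdx n c => s.1 = 0) f)) := by
  suffices restrictBlocks n c J = (map (Ideal.Quotient.mk J)).comp
      (constantCoeff.comp (splitAlgEquiv (R := k) fun s : BlockIdx n c => s.1 = 0).toRingHom) from
    congr($this f)
  refine MvPolynomial.ringHom_ext (fun r => ?_) fun s => ?_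
  · simp [restrictBlocks]
  · by_cases h : s.1 = 0
    · simp [restrictBlocks, h, splitAlgEquiv_X_of_pos (p := fun s : BlockIdx n c => s.1 = 0) h]
    · simp [restrictBlocks, h, splitAlgEquiv_X_of_neg (p := fun s : BlockIdx n c => s.1 = 0) h]

theorem lemma_II_d_part_one_general (k : Type*) [CommRing k]
    (n : ℕ) (c : Fin (n + 1) → ℕ)
    (a : Fin (n + 1) → ℕ) (ha : StrictMono a)
    (V : Submodule k (MvPolynomial (BlockIdx n c) k))
    (hnd : ∀ (J : Ideal k) (b : ℕ), 0 < b →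
      ∀ der : Derivation (k ⧸ J) (MvPolynomial {s : BlockIdx n c // s.1 ≠ 0} (k ⧸ J))
          (MvPolynomial {s : BlockIdx n c // s.1 ≠ 0} (k ⧸ J)),
        DerivationHasWt (fun t : {s : BlockIdx n c // s.1 ≠ 0} => (a t.1.1 : ℤ)) (b : ℤ) der →
        (∀ f ∈ V, der (restrictBlocks n c J f) = 0) → der = 0) :
    ∀ b : ℕ, 0 < b → b ≠ a 0 →
      ∀ der : Derivation k (MvPolynomial (BlockIdx n c) k) (MvPolynomial (BlockIdx n c) k),
        DerivationHasWt (blockWt a) (b : ℤ) der →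
        (∀ f ∈ V, der f = 0) → der = 0 := by
  intro b hb hba der hder hV
  set D := der.mapAlgEquiv (splitAlgEquiv fun s : BlockIdx n c => s.1 = 0)
  have hwt : ∀ s : BlockIdx n c, (a 0 : ℤ) ≤ blockWt a s := fun s => by
    simpa [blockWt] using ha.monotone (Fin.zero_le s.1)
  have hDX : ∀ t, D (X t) = 0 := fun t => by
    have ht : blockWt a t.1 = a 0 := by simp [blockWt, t.2]
    rw [Derivation.mapAlgEquiv_apply, splitAlgEquiv_symm_X,
      (hder t.1).eq_zero_of_lt (by positivity) hwt (by omega) (by omega), map_zero]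
  have hE : ∀ m, coeffDerivation D m = 0 := by
    intro m
    induction m using WellFoundedLT.induction with
    | _ m ih =>
      refine eq_zero_of_mapDerivation_eq_zero (φ := Ideal.Quotient.mk ⊥)
        ((RingHom.injective_iff_ker_eq_bot _).mpr Ideal.mk_ker) <|
        hnd ⊥ _ (by omega) _ (hder.coeffDerivation_splitAlgEquiv m).mapDerivation fun f hf => ?_
      rw [restrictBlocks_eq_map_coeff_zero, mapDerivation_map,
        coeffDerivation_coeff_zero_eq_zero hDX (by simp [D, hV f hf]) ih, map_zero]
  exact Derivation.eq_zero_of_mapAlgEquiv_eq_zero (eq_zero_of_forall_coeffDerivation_eq_zero hDX hE)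

/-- **Paper's Lemma II.d, first part**: `L_{-b}(V_d) = 0` for `b ≠ a 0`.  Under the
nondegeneracy hypothesis II.c (for every quotient `k'` of `k`, every negative-weight
`k'`-derivation of the subring in the variables of weight `> a 0` annihilating the image
`V'_d` of `V_d` is zero), every `k`-derivation of weight `-b`, `b > 0`, `b ≠ a 0`, vanishing
on `V_d` is zero. -/
theorem lemma_II_d_part_one (k : Type*) [CommRing k] [CharZero k]
    (n : ℕ) (c : Fin (n + 1) → ℕ) (hc : ∀ i, 1 ≤ c i)
    (a : Fin (n + 1) → ℕ) (ha : StrictMono a) (ha0 : 0 < a 0)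
    (d : ℕ)
    (V : Submodule k (MvPolynomial (BlockIdx n c) k))
    (hV : ∀ f ∈ V, MvPolynomial.IsWeightedHomogeneous (blockWt a) f (d : ℤ))
    (hnd : ∀ (J : Ideal k) (b : ℕ), 0 < b →
      ∀ der : Derivation (k ⧸ J) (MvPolynomial {s : BlockIdx n c // s.1 ≠ 0} (k ⧸ J))
          (MvPolynomial {s : BlockIdx n c // s.1 ≠ 0} (k ⧸ J)),
        DerivationHasWt (fun t : {s : BlockIdx n c // s.1 ≠ 0} => (a t.1.1 : ℤ)) (b : ℤ) der →
        (∀ f ∈ V, der (restrictBlocks n c J f) = 0) → der = 0) :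
    ∀ b : ℕ, 0 < b → b ≠ a 0 →
      ∀ der : Derivation k (MvPolynomial (BlockIdx n c) k) (MvPolynomial (BlockIdx n c) k),
        DerivationHasWt (blockWt a) (b : ℤ) der →
        (∀ f ∈ V, der f = 0) → der = 0 :=
  lemma_II_d_part_one_general k n c a ha V hnd
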